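/- arXiv:1007.0223 — 3 statements merged into one kernel-verified Lean document; each statement's English description precedes it below -/
import Mathlib

section
/- Let R be an associative unital ring and M a left R-module with a Hausdorff linear topology. If M has the descending chain condition on closed submodules, then M is linearly compact. In particular, every artinian R-module is linearly compact under the discrete topology. -/
/-- A *linear topology* on a left `R`-module `M`: the module operations are continuous,
and `0` has a neighborhood basis consisting of submodules. -/
def IsLinearTopologyOld (R M : Type*) [Ring R] [AddCommGroup M] [Module R M]
    [TopologicalSpace M] : Prop :=
  ContinuousAdd M ∧ ContinuousNeg M ∧ (∀ r : R, Continuous fun m : M => r • m) ∧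
    ∀ U ∈ nhds (0 : M), ∃ N : Submodule R M, (N : Set M) ∈ nhds (0 : M) ∧ (N : Set M) ⊆ U

/-- `M` is *linearly compact*: its topology is a Hausdorff linear topology such that every
family of cosets of closed submodules of `M` with the finite intersection property has
nonempty intersection. -/
def IsLinearlyCompact (R M : Type*) [Ring R] [AddCommGroup M] [Module R M]
    [TopologicalSpace M] : Prop :=
  IsLinearTopologyOld R M ∧ T2Space M ∧
    ∀ 𝒞 : Set (Set M),
      (∀ C ∈ 𝒞, ∃ (N : Submodule R M) (x : M),
        IsClosed (N : Set M) ∧ C = (x + ·) '' (N : Set M)) →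
      (∀ 𝒟 ⊆ 𝒞, 𝒟.Finite → (⋂₀ 𝒟).Nonempty) →
      (⋂₀ 𝒞).Nonempty

/-!
Finite intersections of the cosets in the family are nonempty, hence cosets of the meets of
their directions, which are closed submodules. By the descending chain condition some finite
subfamily `𝒟₀` has a minimal such meet `N₀`; minimality forces `N₀` into the direction of
every member `C` of the family, and then a point of `⋂₀ 𝒟₀` differs from a point of
`C ∩ ⋂₀ 𝒟₀` by an element of `N₀`, so it lies in `C` as well.
-/

section LinearlyCompact

variable {R M : Type*} [Ring R] [AddCommGroup M] [Module R M]

theorem mem_image_add_iff {N : Submodule R M} {x m : M} :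
    m ∈ (x + ·) '' (N : Set M) ↔ m - x ∈ N := by
  constructor
  · rintro ⟨n, hn, rfl⟩
    simpa using hn
  · exact fun h => ⟨m - x, h, add_sub_cancel x m⟩

theorem sInter_subset_sInter_of_iInf_le {𝒞 𝒟 : Set (Set M)} (dir : Set M → Submodule R M)
    (x : Set M → M) (hdir : ∀ C ∈ 𝒞, C = (x C + ·) '' (dir C : Set M))
    (hfip : ∀ 𝒟 ⊆ 𝒞, 𝒟.Finite → (⋂₀ 𝒟).Nonempty) (h𝒟 : 𝒟 ⊆ 𝒞) (h𝒟fin : 𝒟.Finite)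
    (hle : ∀ C ∈ 𝒞, ⨅ D ∈ 𝒟, dir D ≤ dir C) :
    ⋂₀ 𝒟 ⊆ ⋂₀ 𝒞 := by
  intro z₀ hz₀ C hC
  obtain ⟨z, hzC, hz𝒟⟩ : (C ∩ ⋂₀ 𝒟).Nonempty := by
    simpa only [Set.sInter_insert] using
      hfip (insert C 𝒟) (Set.insert_subset hC h𝒟) (h𝒟fin.insert C)
  have hdiff : z - z₀ ∈ ⨅ D ∈ 𝒟, dir D := by
    simp only [Submodule.mem_iInf]
    intro D hD
    have hz := hz𝒟 D hD
    have hz₀ := hz₀ D hD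
    rw [hdir D (h𝒟 hD), mem_image_add_iff] at hz hz₀
    simpa using sub_mem hz hz₀
  rw [hdir C hC, mem_image_add_iff] at hzC ⊢
  simpa using sub_mem hzC (hle C hC hdiff)

variable [TopologicalSpace M]

theorem sInter_nonempty_of_isWF (hwf : {N : Submodule R M | IsClosed (N : Set M)}.IsWF)
    {𝒞 : Set (Set M)}
    (hmem : ∀ C ∈ 𝒞, ∃ (N : Submodule R M) (x : M),
      IsClosed (N : Set M) ∧ C = (x + ·) '' (N : Set M))
    (hfip : ∀ 𝒟 ⊆ 𝒞, 𝒟.Finite → (⋂₀ 𝒟).Nonempty) :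
    (⋂₀ 𝒞).Nonempty := by
  choose! dir x hclosed hdir using hmem
  set S := {N : Submodule R M | ∃ 𝒟 ⊆ 𝒞, 𝒟.Finite ∧ ⨅ D ∈ 𝒟, dir D = N}
  have hS : S ⊆ {N | IsClosed (N : Set M)} := by
    rintro _ ⟨𝒟, h𝒟, -, rfl⟩
    simp only [Set.mem_ofPred_eq, Submodule.coe_iInf]
    exact isClosed_biInter fun D hD => hclosed D (h𝒟 hD)
  obtain ⟨_, ⟨𝒟₀, h𝒟₀, h𝒟₀fin, rfl⟩, hmin⟩ :=
    Set.WellFoundedOn.exists_minimal (hwf.mono hS) ⟨⊤, ∅, Set.empty_subset _, Set.finite_empty,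
      by simp⟩
  refine (hfip 𝒟₀ h𝒟₀ h𝒟₀fin).mono <|
    sInter_subset_sInter_of_iInf_le dir x hdir hfip h𝒟₀ h𝒟₀fin ?_
  intro C hC
  have hinsert : ⨅ D ∈ insert C 𝒟₀, dir D ∈ S :=
    ⟨insert C 𝒟₀, Set.insert_subset hC h𝒟₀, h𝒟₀fin.insert C, rfl⟩
  rw [iInf_insert] at hinsert
  exact (hmin hinsert inf_le_right).trans inf_le_left

theorem isWF_isClosed_of_dcc
    (hdcc : ∀ f : ℕ → Submodule R M, (∀ n, IsClosed ((f n : Submodule R M) : Set M)) →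
      (∀ n, f (n + 1) ≤ f n) → ∃ n, ∀ m, n ≤ m → f m = f n) :
    {N : Submodule R M | IsClosed (N : Set M)}.IsWF := by
  rw [Set.isWF_iff_no_descending_seq]
  intro f hf hclosed
  obtain ⟨n, hn⟩ := hdcc f hclosed fun n => (hf n.lt_succ_self).le
  exact (hf n.lt_succ_self).ne (hn _ n.le_succ)

theorem isLinearlyCompact_of_isWF [T2Space M] (hlin : IsLinearTopologyOld R M)
    (hwf : {N : Submodule R M | IsClosed (N : Set M)}.IsWF) :
    IsLinearlyCompact R M :=
  ⟨hlin, inferInstance, fun _ => sInter_nonempty_of_isWF hwf⟩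

theorem isLinearTopologyOld_of_discreteTopology [DiscreteTopology M] :
    IsLinearTopologyOld R M :=
  ⟨⟨continuous_of_discreteTopology⟩, ⟨continuous_of_discreteTopology⟩,
    fun _ => continuous_of_discreteTopology,
    fun U hU => ⟨⊥, by simp, by simpa using mem_of_mem_nhds hU⟩⟩

end LinearlyCompact

/-- A Hausdorff linearly topologized module with DCC on closed submodules is linearly
compact; in particular, an artinian module is linearly compact in the discrete topology. -/
theorem linearlyCompact_of_dcc_closed (R : Type*) [Ring R] :
    (∀ (M : Type*) [AddCommGroup M] [Module R M] [TopologicalSpace M],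
      IsLinearTopologyOld R M → T2Space M →
      (∀ f : ℕ → Submodule R M, (∀ n, IsClosed ((f n : Submodule R M) : Set M)) →
        (∀ n, f (n + 1) ≤ f n) → ∃ n, ∀ m, n ≤ m → f m = f n) →
      IsLinearlyCompact R M) ∧
    (∀ (M : Type*) [AddCommGroup M] [Module R M] [TopologicalSpace M] [DiscreteTopology M],
      IsArtinian R M → IsLinearlyCompact R M) :=
  ⟨fun _ _ _ _ hlin _ hdcc => isLinearlyCompact_of_isWF hlin (isWF_isClosed_of_dcc hdcc),
    fun _ _ _ _ _ _ => isLinearlyCompact_of_isWF isLinearTopologyOld_of_discreteTopology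
      (Set.IsWF.of_wellFoundedLT _)⟩
end

section
/- Let k be a field and L a Lie algebra over k generated as a Lie algebra by elements g₁, …, g_r. Define subspaces L_(n) recursively by L_(1) = L and L_(n+1) = Σ_{0<m<n+1} ⁅L_(m), L_(n+1−m)⁆. Then for every integer n ≥ 2, L_(n) = Σ over all sequences (i₁, …, i_{n−1}) ∈ {1,…,r}^{n−1} of the subspaces {⁅…⁅⁅a, g_{i₁}⁆, g_{i₂}⁆, …, g_{i_{n−1}}⁆ : a ∈ L}. In particular ⁅L, L⁆ = Σ_{i=1}^r {⁅a, g_i⁆ : a ∈ L}, and L_(n) coincides with the n-th term of the lower central series of L. -/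
/-!
Write `γ_{n+1}` for Mathlib's `lowerCentralSeries k L L n`. The Jacobi identity gives
`⁅γ_i, γ_j⁆ ⊆ γ_{i+j}`, while the single summand `⁅L_(n), L_(1)⁆` of the recursion is already
`γ_{n+1}`; so `L_(n) = γ_n` by strong induction. Let `T_m` be the span of the right-normed
brackets `⁅…⁅a, g i₁⁆, …, g i_m⁆`. Then `T_{m+1} ⊆ T_m`, and the `b` with `⁅T_m, b⁆ ⊆ T_{m+1}`
for all `m` form a Lie subalgebra (Jacobi again) containing the generators, hence all of `L`.
This gives `γ_{m+1} ⊆ T_m`, and the converse inclusion is clear.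
-/

/-- For subspaces `A`, `B` of a Lie algebra `L`, the `k`-subspace spanned by all
brackets `⁅a, b⁆` with `a ∈ A`, `b ∈ B`. -/
def bracketSpan (k L : Type*) [Field k] [LieRing L] [LieAlgebra k L]
    (A B : Submodule k L) : Submodule k L :=
  Submodule.span k {x : L | ∃ a ∈ A, ∃ b ∈ B, x = ⁅a, b⁆}

open LieModule

section LowerCentralSeries

variable {R L : Type*} [CommRing R] [LieRing L] [LieAlgebra R L]

theorem lie_mem_lowerCentralSeries_succ {i : ℕ} {x : L}
    (hx : x ∈ lowerCentralSeries R L L i) (y : L) :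
    ⁅x, y⁆ ∈ lowerCentralSeries R L L (i + 1) := by
  rw [← lie_skew, neg_mem_iff, LieModule.lowerCentralSeries_succ]
  exact LieSubmodule.lie_mem_lie (LieSubmodule.mem_top y) hx

theorem lie_mem_lowerCentralSeries_add_succ {i j : ℕ} {x y : L}
    (hx : x ∈ lowerCentralSeries R L L i) (hy : y ∈ lowerCentralSeries R L L j) :
    ⁅x, y⁆ ∈ lowerCentralSeries R L L (i + j + 1) := by
  induction j generalizing i x y with
  | zero => exact lie_mem_lowerCentralSeries_succ hx y
  | succ j ih =>
    rw [← LieSubmodule.mem_toSubmodule, LieModule.lowerCentralSeries_succ,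
      LieSubmodule.lieIdeal_oper_eq_linear_span'] at hy
    induction hy using Submodule.span_induction with
    | mem _ hz =>
      obtain ⟨z, -, w, hw, rfl⟩ := hz
      rw [leibniz_lie]
      refine add_mem ?_ ?_
      · rw [show i + (j + 1) + 1 = i + 1 + j + 1 by omega]
        exact ih (lie_mem_lowerCentralSeries_succ hx z) hw
      · rw [show i + (j + 1) + 1 = i + j + 1 + 1 by omega, LieModule.lowerCentralSeries_succ]
        exact LieSubmodule.lie_mem_lie (LieSubmodule.mem_top z) (ih hx hw)
    | zero => simp
    | add _ _ _ _ h₁ h₂ => rw [lie_add]; exact add_mem h₁ h₂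
    | smul c _ _ h => rw [lie_smul]; exact SMulMemClass.smul_mem c h

theorem foldl_lie_mem_lowerCentralSeries {ι : Type*} (g : ι → L) (l : List ι) {i : ℕ} {a : L}
    (ha : a ∈ lowerCentralSeries R L L i) :
    l.foldl (fun y j => ⁅y, g j⁆) a ∈ lowerCentralSeries R L L (i + l.length) := by
  induction l generalizing i a with
  | nil => simpa using ha
  | cons j l ih =>
    simpa [Nat.add_comm 1, add_assoc] using ih (lie_mem_lowerCentralSeries_succ ha (g j))

end LowerCentralSeries

section BracketSpan

variable {k L : Type*} [Field k] [LieRing L] [LieAlgebra k L]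

theorem bracketSpan_comm (A B : Submodule k L) : bracketSpan k L A B = bracketSpan k L B A := by
  suffices ∀ A B : Submodule k L, bracketSpan k L A B ≤ bracketSpan k L B A from
    le_antisymm (this A B) (this B A)
  intro A B
  refine Submodule.span_le.2 ?_
  rintro _ ⟨a, ha, b, hb, rfl⟩
  rw [← lie_skew]
  exact neg_mem (Submodule.subset_span ⟨b, hb, a, ha, rfl⟩)

theorem lowerCentralSeries_succ_eq_bracketSpan (i : ℕ) :
    (lowerCentralSeries k L L (i + 1)).toSubmodule =
      bracketSpan k L ⊤ (lowerCentralSeries k L L i).toSubmodule := by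
  rw [LieModule.lowerCentralSeries_succ, LieSubmodule.lieIdeal_oper_eq_linear_span', bracketSpan]
  congr 1
  ext x
  simp [eq_comm]

theorem bracketSpan_lowerCentralSeries_le (i j : ℕ) :
    bracketSpan k L (lowerCentralSeries k L L i).toSubmodule
        (lowerCentralSeries k L L j).toSubmodule ≤
      (lowerCentralSeries k L L (i + j + 1)).toSubmodule :=
  Submodule.span_le.2 fun _ ⟨_, hx, _, hy, hxy⟩ =>
    hxy ▸ lie_mem_lowerCentralSeries_add_succ hx hy

theorem eq_lowerCentralSeries_of_eq_iSup_bracketSpan {Ln : ℕ → Submodule k L}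
    (h1 : Ln 1 = ⊤)
    (hrec : ∀ n : ℕ, 1 ≤ n →
      Ln (n + 1) = ⨆ m : {m : ℕ // 0 < m ∧ m < n + 1},
        bracketSpan k L (Ln m) (Ln (n + 1 - m))) (p : ℕ) :
    Ln (p + 1) = (lowerCentralSeries k L L p).toSubmodule := by
  induction p using Nat.strong_induction_on with
  | _ p ih =>
    match p with
    | 0 => simpa using h1
    | q + 1 =>
      rw [hrec (q + 1) (by omega)]
      apply le_antisymm
      · refine iSup_le fun ⟨m, hm0, hmq⟩ => ?_
        obtain ⟨i, rfl⟩ : ∃ i, m = i + 1 := ⟨m - 1, by omega⟩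
        obtain ⟨j, hj⟩ : ∃ j, q + 1 + 1 - (i + 1) = j + 1 := ⟨q - i, by omega⟩
        rw [hj, ih i (by omega), ih j (by omega), show q + 1 = i + j + 1 by omega]
        exact bracketSpan_lowerCentralSeries_le i j
      · refine le_iSup_of_le ⟨q + 1, by omega, by omega⟩ ?_
        rw [show q + 1 + 1 - (q + 1) = 1 by omega, h1, ih q (by omega), bracketSpan_comm,
          lowerCentralSeries_succ_eq_bracketSpan]

end BracketSpan

section RightBracketSpan

variable (R : Type*) {L ι : Type*} [CommRing R] [LieRing L] [LieAlgebra R L] (g : ι → L)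

def rightBracketSpan (m : ℕ) : Submodule R L :=
  ⨆ w : Fin m → ι,
    Submodule.span R {x : L | ∃ a : L, x = (List.ofFn w).foldl (fun y j => ⁅y, g j⁆) a}

variable {R g}

theorem foldl_mem_rightBracketSpan {m : ℕ} (w : Fin m → ι) (a : L) :
    (List.ofFn w).foldl (fun y j => ⁅y, g j⁆) a ∈ rightBracketSpan R g m :=
  Submodule.mem_iSup_of_mem w (Submodule.subset_span ⟨a, rfl⟩)

theorem rightBracketSpan_le_iff {m : ℕ} {N : Submodule R L} :
    rightBracketSpan R g m ≤ N ↔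
      ∀ (w : Fin m → ι) (a : L), (List.ofFn w).foldl (fun y j => ⁅y, g j⁆) a ∈ N := by
  simp only [rightBracketSpan, iSup_le_iff, Submodule.span_le]
  exact forall_congr' fun w => ⟨fun h a => h ⟨a, rfl⟩, fun h _ ⟨a, hx⟩ => hx ▸ h a⟩

@[simp]
theorem rightBracketSpan_zero : rightBracketSpan R g 0 = ⊤ :=
  eq_top_iff.2 fun a _ => by
    simpa only [List.ofFn_zero, List.foldl_nil] using
      foldl_mem_rightBracketSpan (R := R) (g := g) Fin.elim0 a

theorem rightBracketSpan_succ_le (m : ℕ) : rightBracketSpan R g (m + 1) ≤ rightBracketSpan R g m :=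
  rightBracketSpan_le_iff.2 fun w a => by
    rw [List.ofFn_succ, List.foldl_cons]
    exact foldl_mem_rightBracketSpan _ _

theorem lie_generator_mem_rightBracketSpan_succ {m : ℕ} (i : ι) {s : L}
    (hs : s ∈ rightBracketSpan R g m) : ⁅s, g i⁆ ∈ rightBracketSpan R g (m + 1) := by
  suffices rightBracketSpan R g m ≤
      (rightBracketSpan R g (m + 1)).comap (-LieModule.toEnd R L L (g i)) by
    simpa only [Submodule.mem_comap, LinearMap.neg_apply, LieModule.toEnd_apply_apply, lie_skew]
      using this hs
  refine rightBracketSpan_le_iff.2 fun w a => ?_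
  rw [Submodule.mem_comap, LinearMap.neg_apply, LieModule.toEnd_apply_apply, lie_skew]
  simpa only [List.ofFn_succ', Fin.snoc_castSucc, Fin.snoc_last, List.concat_eq_append,
    List.foldl_append, List.foldl_cons, List.foldl_nil] using
    foldl_mem_rightBracketSpan (R := R) (g := g) (Fin.snoc w i) a

theorem lie_mem_rightBracketSpan_succ (hgen : LieSubalgebra.lieSpan R L (Set.range g) = ⊤)
    (b : L) {m : ℕ} {s : L} (hs : s ∈ rightBracketSpan R g m) :
    ⁅s, b⁆ ∈ rightBracketSpan R g (m + 1) := by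
  have hb : b ∈ LieSubalgebra.lieSpan R L (Set.range g) := hgen ▸ LieSubalgebra.mem_top b
  induction hb using LieSubalgebra.lieSpan_induction generalizing m s with
  | mem _ hx =>
    obtain ⟨i, rfl⟩ := hx
    exact lie_generator_mem_rightBracketSpan_succ i hs
  | zero => simp
  | add _ _ _ _ hx hy => rw [lie_add]; exact add_mem (hx hs) (hy hs)
  | smul c _ _ hx => rw [lie_smul]; exact SMulMemClass.smul_mem c (hx hs)
  | lie x y _ _ hx hy =>
    rw [leibniz_lie, ← lie_skew x]
    exact add_mem (hy (rightBracketSpan_succ_le m (hx hs)))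
      (neg_mem (hx (rightBracketSpan_succ_le m (hy hs))))

theorem lowerCentralSeries_eq_rightBracketSpan
    (hgen : LieSubalgebra.lieSpan R L (Set.range g) = ⊤) (m : ℕ) :
    (lowerCentralSeries R L L m).toSubmodule = rightBracketSpan R g m := by
  apply le_antisymm
  · induction m with
    | zero => simp
    | succ m ih =>
      rw [LieModule.lowerCentralSeries_succ, LieSubmodule.lieIdeal_oper_eq_linear_span',
        Submodule.span_le]
      rintro _ ⟨x, -, s, hs, rfl⟩
      rw [← lie_skew]
      exact neg_mem (lie_mem_rightBracketSpan_succ hgen x (ih hs))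
  · refine rightBracketSpan_le_iff.2 fun w a => ?_
    simpa using foldl_lie_mem_lowerCentralSeries g (List.ofFn w)
      (by simp : a ∈ lowerCentralSeries R L L 0)

theorem rightBracketSpan_one :
    rightBracketSpan R g 1 = ⨆ i : ι, Submodule.span R {x : L | ∃ a : L, x = ⁅a, g i⁆} := by
  rw [rightBracketSpan, ← (Equiv.funUnique (Fin 1) ι).symm.iSup_comp]
  simp

end RightBracketSpan

/-- If a Lie algebra `L` is generated by `g 0, …, g (r-1)`, and `L_(n)` is defined by
`L_(1) = L`, `L_(n+1) = Σ_{0<m<n+1} ⁅L_(m), L_(n+1-m)⁆`, then for `n ≥ 2` the subspace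
`L_(n)` is the sum over all sequences `(i₁,…,i_{n-1})` of the spaces of iterated brackets
`⁅…⁅⁅a, g i₁⁆, g i₂⁆, …, g i_{n-1}⁆`; in particular `⁅L,L⁆ = Σᵢ {⁅a, g i⁆}`; and `L_(n)`
is the `n`-th term of the lower central series of `L`. -/
theorem lie_power_eq_sum_right_brackets (k L : Type*) [Field k] [LieRing L]
    [LieAlgebra k L] (r : ℕ) (g : Fin r → L)
    (hgen : LieSubalgebra.lieSpan k L (Set.range g) = ⊤)
    (Ln : ℕ → Submodule k L) (h1 : Ln 1 = ⊤)
    (hrec : ∀ n : ℕ, 1 ≤ n →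
      Ln (n + 1) = ⨆ m : {m : ℕ // 0 < m ∧ m < n + 1},
        bracketSpan k L (Ln m) (Ln (n + 1 - m))) :
    (∀ n : ℕ, 2 ≤ n →
      Ln n = ⨆ w : Fin (n - 1) → Fin r,
        Submodule.span k
          {x : L | ∃ a : L, x = (List.ofFn w).foldl (fun y j => ⁅y, g j⁆) a}) ∧
    (bracketSpan k L ⊤ ⊤ =
      ⨆ i : Fin r, Submodule.span k {x : L | ∃ a : L, x = ⁅a, g i⁆}) ∧
    (∀ n : ℕ, 1 ≤ n →
      Ln n = (LieModule.lowerCentralSeries k L L (n - 1)).toSubmodule) := by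
  have hLn := eq_lowerCentralSeries_of_eq_iSup_bracketSpan h1 hrec
  have hlcs := lowerCentralSeries_eq_rightBracketSpan hgen
  refine ⟨fun n hn => ?_, ?_, fun n hn => ?_⟩
  · obtain ⟨p, rfl⟩ : ∃ p, n = p + 1 := ⟨n - 1, by omega⟩
    rw [hLn, hlcs, Nat.add_sub_cancel]
    rfl
  · rw [← rightBracketSpan_one, ← hlcs, lowerCentralSeries_succ_eq_bracketSpan,
      LieModule.lowerCentralSeries_zero, LieSubmodule.top_toSubmodule]
  · obtain ⟨p, rfl⟩ : ∃ p, n = p + 1 := ⟨n - 1, by omega⟩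
    rw [hLn, Nat.add_sub_cancel]
end

section
/- Let k be a field and A a (not necessarily unital) associative topological k-algebra which is the inverse limit, with the inverse limit topology, of an inversely directed system of finite-dimensional discrete k-algebras, and suppose some finitely generated subalgebra S of A is dense in A. Then: (i) for every n ≥ 1 the two-sided ideal A^n (the k-span of all products of n elements of A) is open in A, and A^n is the closure of S^n; (ii) every k-algebra homomorphism from A to a nilpotent k-algebra B, with B given the discrete topology, is continuous (i.e., its kernel is an open ideal); (iii) if moreover the finite-dimensional algebras in the inverse system are all nilpotent, then every k-algebra homomorphism from A to a finite-dimensional k-algebra B (discrete) is continuous. -/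
/-- `setPow k A T n` is the `k`-subspace of a nonunital associative `k`-algebra `A`
spanned by all products of `n` elements of the subset `T` (written left-bracketed,
which by associativity involves no loss of generality). Taking `T = Set.univ` gives
the ideal `Aⁿ`. -/
def setPow (k A : Type*) [Field k] [NonUnitalRing A] [Module k A]
    (T : Set A) (n : ℕ) : Submodule k A :=
  Submodule.span k {x : A | ∃ (a : A) (l : List A),
    a ∈ T ∧ (∀ b ∈ l, b ∈ T) ∧ l.length + 1 = n ∧ x = l.foldl (· * ·) a}

/-!
The kernels `K i` of the projections `π i` are ideals of finite codimension forming a basis of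
neighbourhoods of `0`, and `A` is complete with respect to them. A Zorn argument makes `A`
linearly compact: a compatible family of cosets of any coarser decreasing family of subspaces
has a common point. Hence the image of a finite power `Aᵂ → A`, such as `∑ w, w A` over the
finitely many words `w` of length `n - 1` in `s`, is closed. As `S` is dense,
`Aⁿ ⊆ closure Sⁿ ⊆ ∑ w, w A ⊆ Aⁿ`, so `Aⁿ` is closed. It has finite codimension, because
`A = V + Aⁿ` with `V` spanned by the shorter words, and a closed subspace of finite codimension
contains some `K i`, so `Aⁿ` is open and every homomorphism vanishing on some `Aⁿ` is continuous.
This covers nilpotent targets. If all `B i` are nilpotent, every element of `A` is quasiregular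
(quasi-inverses are unique, so they glue along the inverse system); the image of `A` in a
finite-dimensional algebra then lies in the Jacobson radical of its unitization, so it is
nilpotent.
-/

open Submodule

section Words

variable {A : Type*}

def words [Mul A] (T : Set A) (n : ℕ) : Set A :=
  {x | ∃ (a : A) (l : List A),
    a ∈ T ∧ (∀ b ∈ l, b ∈ T) ∧ l.length + 1 = n ∧ x = l.foldl (· * ·) a}

@[simp]
theorem mem_words_one [Mul A] {T : Set A} {x : A} : x ∈ words T 1 ↔ x ∈ T := by
  refine ⟨?_, fun hx => ⟨x, [], hx, by simp, rfl, rfl⟩⟩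
  rintro ⟨a, l, ha, -, hl, rfl⟩
  rwa [List.length_eq_zero_iff.mp (by omega : l.length = 0)]

theorem words_mono [Mul A] {T T' : Set A} (h : T ⊆ T') (n : ℕ) : words T n ⊆ words T' n := by
  rintro _ ⟨a, l, ha, hl, hn, rfl⟩
  exact ⟨a, l, h ha, fun b hb => h (hl b hb), hn, rfl⟩

theorem map_foldl {B F : Type*} [Mul A] [Mul B] [FunLike F A B] [MulHomClass F A B] (f : F)
    (l : List A) (a : A) : f (l.foldl (· * ·) a) = (l.map f).foldl (· * ·) (f a) := by
  induction l generalizing a with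
  | nil => rfl
  | cons b l ih => simp [ih, map_mul]

theorem words_finite [Mul A] {T : Set A} (hT : T.Finite) (n : ℕ) : (words T n).Finite := by
  have hlists : {l : List A | l.length = n - 1 ∧ ∀ b ∈ l, b ∈ T}.Finite := by
    have := hT.to_subtype
    refine ((List.finite_length_eq T (n - 1)).image (List.map Subtype.val)).subset ?_
    rintro l ⟨hlen, hl⟩
    exact ⟨l.attach.map fun b => ⟨b.1, hl b.1 b.2⟩, by simp [hlen], by simp⟩
  refine ((hT.prod hlists).image fun p => p.2.foldl (· * ·) p.1).subset ?_
  rintro _ ⟨a, l, ha, hl, hlen, rfl⟩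
  exact ⟨(a, l), ⟨ha, by dsimp; omega, hl⟩, rfl⟩

theorem map_mem_words {B F : Type*} [Mul A] [Mul B] [FunLike F A B] [MulHomClass F A B] (f : F)
    {T : Set A} {n : ℕ} {x : A} (hx : x ∈ words T n) : f x ∈ words (f '' T) n := by
  obtain ⟨a, l, ha, hl, rfl, rfl⟩ := hx
  refine map_foldl f l a ▸ ⟨f a, l.map f, ⟨a, ha, rfl⟩, ?_, by simp, rfl⟩
  simp only [List.mem_map]
  rintro _ ⟨b, hb, rfl⟩
  exact ⟨b, hl b hb, rfl⟩

def wordsAtLeast [Mul A] (T : Set A) (p : ℕ) : Set A := {x | ∃ n, p ≤ n ∧ x ∈ words T n}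

theorem wordsAtLeast_anti [Mul A] (T : Set A) {p q : ℕ} (hpq : p ≤ q) :
    wordsAtLeast T q ⊆ wordsAtLeast T p :=
  fun _ ⟨n, hqn, hx⟩ => ⟨n, hpq.trans hqn, hx⟩

variable [Semigroup A]

theorem mul_foldl (x a : A) (l : List A) : x * l.foldl (· * ·) a = l.foldl (· * ·) (x * a) :=
  List.foldl_assoc.symm

theorem mul_mem_words {T : Set A} {m n : ℕ} {x y : A} (hx : x ∈ words T m)
    (hy : y ∈ words T n) : x * y ∈ words T (m + n) := by
  obtain ⟨a, l, ha, hl, rfl, rfl⟩ := hx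
  obtain ⟨b, l', hb, hl', rfl, rfl⟩ := hy
  rw [mul_foldl, ← List.foldl_cons (f := (· * ·)), ← List.foldl_append]
  refine ⟨a, l ++ b :: l', ha, ?_, by simp; omega, rfl⟩
  simp only [List.mem_append, List.mem_cons]
  rintro c (hc | rfl | hc)
  exacts [hl c hc, hb, hl' c hc]

theorem exists_mul_of_mem_words {T : Set A} {m n : ℕ} (hm : 1 ≤ m) (hn : 1 ≤ n) {x : A}
    (hx : x ∈ words T (m + n)) : ∃ y ∈ words T m, ∃ z ∈ words T n, x = y * z := by
  obtain ⟨a, l, ha, hl, hlen, rfl⟩ := hx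
  obtain ⟨b, l', hdrop⟩ : ∃ b l', l.drop (m - 1) = b :: l' :=
    List.exists_cons_of_ne_nil (by simp; omega)
  have hmem : ∀ c ∈ l.drop (m - 1), c ∈ T := fun c hc => hl c (List.mem_of_mem_drop hc)
  rw [hdrop] at hmem
  refine ⟨(l.take (m - 1)).foldl (· * ·) a,
    ⟨a, _, ha, fun c hc => hl c (List.mem_of_mem_take hc), by simp; omega, rfl⟩,
    l'.foldl (· * ·) b, ⟨b, l', hmem b (by simp), fun c hc => hmem c (by simp [hc]), ?_, rfl⟩, ?_⟩
  · have := congrArg List.length hdrop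
    simp at this; omega
  · rw [mul_foldl, ← List.foldl_cons (f := (· * ·)), ← hdrop, ← List.foldl_append,
      List.take_append_drop]

theorem words_univ_anti {m n : ℕ} (hm : 1 ≤ m) (hmn : m ≤ n) :
    words (Set.univ : Set A) n ⊆ words Set.univ m := by
  rintro _ ⟨a, l, -, -, hlen, rfl⟩
  rw [← List.take_append_drop (n - m) l, List.foldl_append]
  exact ⟨_, _, trivial, fun _ _ => trivial, by simp; omega, rfl⟩

end Words

section SetPow

variable {k A : Type*} [Field k] [NonUnitalRing A] [Module k A]

theorem setPow_eq_span_words (T : Set A) (n : ℕ) : setPow k A T n = span k (words T n) := rfl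

theorem mul_mem_of_mem_span [SMulCommClass k A A] [IsScalarTower k A A] {G H : Set A}
    {P : Submodule k A} (h : ∀ x ∈ G, ∀ y ∈ H, x * y ∈ P) {x y : A} (hx : x ∈ span k G)
    (hy : y ∈ span k H) : x * y ∈ P := by
  induction hx, hy using span_induction₂ with
  | mem_mem x y hx hy => exact h x hx y hy
  | zero_left y _ => simp
  | zero_right x _ => simp
  | add_left x y z _ _ _ hxz hyz => rw [add_mul]; exact add_mem hxz hyz
  | add_right x y z _ _ _ hxy hxz => rw [mul_add]; exact add_mem hxy hxz
  | smul_left r x y _ _ hxy => rw [smul_mul_assoc]; exact smul_mem _ r hxy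
  | smul_right r x y _ _ hxy => rw [mul_smul_comm]; exact smul_mem _ r hxy

theorem setPow_mono {T T' : Set A} (h : T ⊆ T') (n : ℕ) : setPow k A T n ≤ setPow k A T' n :=
  span_mono (words_mono h n)

theorem setPow_one (T : Set A) : setPow k A T 1 = span k T := by
  rw [setPow_eq_span_words]
  congr 1
  ext
  exact mem_words_one

theorem setPow_univ_one : setPow k A Set.univ 1 = ⊤ := by
  rw [setPow_one, span_univ]

theorem setPow_univ_le_ker {B : Type*} [NonUnitalRing B] [Module k B] (φ : A →ₙₐ[k] B)
    {n : ℕ} (h : setPow k B Set.univ n = ⊥) :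
    setPow k A Set.univ n ≤ LinearMap.ker (φ : A →ₗ[k] B) := by
  refine span_le.mpr fun x hx => ?_
  have : φ x ∈ setPow k B Set.univ n :=
    subset_span (words_mono (Set.subset_univ _) n (map_mem_words φ hx))
  simpa [h] using this

theorem foldl_sub_foldl_map_mem {K : Submodule k A} (hKl : ∀ a x, x ∈ K → a * x ∈ K)
    (hKr : ∀ a x, x ∈ K → x * a ∈ K) {σ : A → A} {l : List A} (hl : ∀ b ∈ l, b - σ b ∈ K)
    {a a' : A} (ha : a - a' ∈ K) : l.foldl (· * ·) a - (l.map σ).foldl (· * ·) a' ∈ K := by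
  induction l generalizing a a' with
  | nil => exact ha
  | cons b l ih =>
    refine ih (fun c hc => hl c (by simp [hc])) ?_
    rw [show a * b - a' * σ b = (a - a') * b + a' * (b - σ b) by noncomm_ring]
    exact add_mem (hKr _ _ ha) (hKl _ _ (hl b (by simp)))

theorem setPow_le_sup {K : Submodule k A} (hKl : ∀ a x, x ∈ K → a * x ∈ K)
    (hKr : ∀ a x, x ∈ K → x * a ∈ K) {T T' : Set A} (hT : ∀ t ∈ T, ∃ t' ∈ T', t - t' ∈ K)
    (n : ℕ) : setPow k A T n ≤ setPow k A T' n ⊔ K := by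
  classical
  choose! σ hσT' hσ using hT
  refine span_le.mpr ?_
  rintro _ ⟨a, l, ha, hl, rfl, rfl⟩
  have hy : (l.map σ).foldl (· * ·) (σ a) ∈ setPow k A T' (l.length + 1) := by
    refine subset_span ⟨σ a, l.map σ, hσT' a ha, ?_, by simp, rfl⟩
    simp only [List.mem_map]
    rintro _ ⟨b, hb, rfl⟩
    exact hσT' b (hl b hb)
  simpa using add_mem_sup hy
    (foldl_sub_foldl_map_mem hKl hKr (fun b hb => hσ b (hl b hb)) (hσ a ha))

end SetPow

section WordsAtLeast

variable {k A : Type*} [Field k] [NonUnitalRing A] [Module k A]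

theorem mul_mem_span_wordsAtLeast [SMulCommClass k A A] [IsScalarTower k A A]
    {T : Set A} {p q : ℕ} {x y : A} (hx : x ∈ span k (wordsAtLeast T p))
    (hy : y ∈ span k (wordsAtLeast T q)) : x * y ∈ span k (wordsAtLeast T (p + q)) := by
  refine mul_mem_of_mem_span (fun x hx y hy => ?_) hx hy
  obtain ⟨m, hpm, hx⟩ := hx
  obtain ⟨n, hqn, hy⟩ := hy
  exact subset_span ⟨m + n, by omega, mul_mem_words hx hy⟩

theorem adjoin_le_span_wordsAtLeast [SMulCommClass k A A] [IsScalarTower k A A] (T : Set A) :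
    (NonUnitalAlgebra.adjoin k T).toSubmodule ≤ span k (wordsAtLeast T 1) := by
  refine (NonUnitalAlgebra.adjoin_le (S := (span k (wordsAtLeast T 1)).toNonUnitalSubalgebra
    fun _ _ hx hy => span_mono (wordsAtLeast_anti T (by omega)) (mul_mem_span_wordsAtLeast hx hy))
    fun _ hx => subset_span ⟨1, le_rfl, mem_words_one.mpr hx⟩ :)

theorem setPow_adjoin_le_span_wordsAtLeast [SMulCommClass k A A] [IsScalarTower k A A]
    (T : Set A) (n : ℕ) :
    setPow k A (NonUnitalAlgebra.adjoin k T) n ≤ span k (wordsAtLeast T n) := by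
  have hfoldl : ∀ l : List A, (∀ b ∈ l, b ∈ NonUnitalAlgebra.adjoin k T) → ∀ (p : ℕ) (a : A),
      a ∈ span k (wordsAtLeast T p) →
        l.foldl (· * ·) a ∈ span k (wordsAtLeast T (p + l.length)) := by
    intro l hl
    induction l with
    | nil => exact fun p a ha => by simpa using ha
    | cons b l ih =>
      intro p a ha
      have hb := adjoin_le_span_wordsAtLeast T (hl b (by simp))
      simpa [add_assoc, add_comm 1] using
        ih (fun c hc => hl c (by simp [hc])) _ _ (mul_mem_span_wordsAtLeast ha hb)
  refine span_le.mpr ?_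
  rintro _ ⟨a, l, ha, hl, rfl, rfl⟩
  simpa [add_comm] using hfoldl l hl 1 a (adjoin_le_span_wordsAtLeast T ha)

variable (k) in
def sumMulLeft [SMulCommClass k A A] {W : Type*} [Fintype W] (w : W → A) : (W → A) →ₗ[k] A :=
  ∑ j, (LinearMap.mulLeft k (w j)).comp (LinearMap.proj j)

variable (k) in
@[simp]
theorem sumMulLeft_apply [SMulCommClass k A A] {W : Type*} [Fintype W] (w t : W → A) :
    sumMulLeft k w t = ∑ j, w j * t j := by
  simp [sumMulLeft]

theorem range_sumMulLeft_le_setPow_univ [SMulCommClass k A A] {T : Set A} {m : ℕ}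
    [Fintype (words T m)] :
    LinearMap.range (sumMulLeft k ((↑) : words T m → A)) ≤ setPow k A Set.univ (m + 1) := by
  rintro _ ⟨t, rfl⟩
  refine (sumMulLeft_apply k _ t).symm ▸ sum_mem fun j _ => subset_span ?_
  exact mul_mem_words (words_mono (Set.subset_univ T) m j.2) (mem_words_one.mpr trivial)

theorem span_wordsAtLeast_le_range_sumMulLeft [SMulCommClass k A A] {T : Set A} {m : ℕ}
    (hm : 1 ≤ m) [Fintype (words T m)] :
    span k (wordsAtLeast T (m + 1)) ≤ LinearMap.range (sumMulLeft k ((↑) : words T m → A)) := by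
  classical
  refine span_le.mpr fun x ⟨n, hn, hx⟩ => ?_
  obtain ⟨y, hy, z, -, rfl⟩ := exists_mul_of_mem_words hm (by omega : 1 ≤ n - m)
    (by rwa [Nat.add_sub_cancel' (by omega : m ≤ n)])
  exact ⟨Pi.single ⟨y, hy⟩ z, by simp [Pi.single_apply]⟩

theorem span_wordsAtLeast_le_sup (T : Set A) {n : ℕ} (hn : 1 ≤ n) :
    span k (wordsAtLeast T 1) ≤
      span k {x | ∃ m < n, x ∈ words T m} ⊔ setPow k A Set.univ n := by
  refine span_le.mpr fun x ⟨m, hm, hx⟩ => ?_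
  rcases lt_or_ge m n with hmn | hmn
  · exact mem_sup_left (subset_span ⟨m, hmn, hx⟩)
  · exact mem_sup_right
      (subset_span (words_univ_anti hn hmn (words_mono (Set.subset_univ T) m hx)))

end WordsAtLeast

section LinearCompactness

variable {k V : Type*} [Field k] [AddCommGroup V] [Module k V]

theorem Submodule.exists_forall_le_of_directed {J : Type*} [Nonempty J] {P : Submodule k V}
    [FiniteDimensional k (V ⧸ P)] (L : J → Submodule k V) (hL : Directed (· ≥ ·) L)
    (hP : ∀ j, P ≤ L j) : ∃ j, ∀ j', L j ≤ L j' := by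
  obtain ⟨_, ⟨j, rfl⟩, hj⟩ := wellFounded_lt.has_min (Set.range fun j => (L j).map P.mkQ)
    (Set.range_nonempty _)
  refine ⟨j, fun j' => ?_⟩
  obtain ⟨c, hcj, hcj'⟩ := hL j j'
  have hmap : (L c).map P.mkQ = (L j).map P.mkQ :=
    (map_mono hcj).eq_of_not_lt (hj _ ⟨c, rfl⟩)
  have hL_eq : ∀ j, L j = ((L j).map P.mkQ).comap P.mkQ := fun j => by
    rw [comap_map_mkQ, sup_eq_right.mpr (hP j)]
  rw [hL_eq j, ← hmap, ← hL_eq c]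
  exact hcj'

theorem AffineSubspace.exists_forall_le_of_directed {J : Type*} [Nonempty J]
    {K : Submodule k V} [FiniteDimensional k (V ⧸ K)] (Q : J → AffineSubspace k V)
    (hQ : Directed (· ≥ ·) Q) (hne : ∀ j, (Q j : Set V).Nonempty)
    (hK : ∀ j, K ≤ (Q j).direction) : ∃ j, ∀ j', Q j ≤ Q j' := by
  obtain ⟨j, hj⟩ := Submodule.exists_forall_le_of_directed (fun j => (Q j).direction)
    (fun a b => let ⟨c, ha, hb⟩ := hQ a b; ⟨c, direction_le ha, direction_le hb⟩) hK
  refine ⟨j, fun j' => ?_⟩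
  obtain ⟨c, hcj, hcj'⟩ := hQ j j'
  obtain ⟨p, hp⟩ := hne c
  have : Q c = Q j := ext_of_direction_eq ((direction_le hcj).antisymm (hj c)) ⟨p, hp, hcj hp⟩
  exact this ▸ hcj'

/-- `Q + K`, as an affine subspace. -/
def AffineSubspace.saturation (K : Submodule k V) (Q : AffineSubspace k V) :
    AffineSubspace k V :=
  (Q.map K.mkQ.toAffineMap).comap K.mkQ.toAffineMap

namespace AffineSubspace

variable {K K' : Submodule k V} {Q Q' P : AffineSubspace k V}

theorem mem_saturation {v : V} : v ∈ saturation K Q ↔ ∃ q ∈ Q, v - q ∈ K := by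
  simp only [saturation, mem_comap, mem_map, LinearMap.coe_toAffineMap, mkQ_apply,
    Submodule.Quotient.eq]
  exact exists_congr fun q => and_congr_right fun _ => sub_mem_comm_iff

theorem le_saturation : Q ≤ saturation K Q :=
  fun q hq => mem_saturation.mpr ⟨q, hq, by simp⟩

theorem saturation_mono (hQ : Q ≤ Q') (hK : K ≤ K') : saturation K Q ≤ saturation K' Q' := by
  intro v hv
  obtain ⟨q, hq, hvq⟩ := mem_saturation.mp hv
  exact mem_saturation.mpr ⟨q, hQ hq, hK hvq⟩

theorem saturation_le (hQ : Q ≤ P) (hK : K ≤ P.direction) : saturation K Q ≤ P := by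
  intro v hv
  obtain ⟨q, hq, hvq⟩ := mem_saturation.mp hv
  simpa using vadd_mem_of_mem_direction (hK hvq) (hQ hq)

theorem le_direction_saturation (hQ : (Q : Set V).Nonempty) :
    K ≤ (saturation K Q).direction := by
  obtain ⟨q, hq⟩ := hQ
  intro w hw
  have h : w + q ∈ saturation K Q := mem_saturation.mpr ⟨q, hq, by simpa using hw⟩
  simpa using vsub_mem_direction h (le_saturation hq)

end AffineSubspace

end LinearCompactness

section CosetCompleteness

open AffineSubspace

variable {k V ι : Type*} [Field k] [AddCommGroup V] [Module k V] [Preorder ι]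

/-- For decreasing `D`, this says that `V → lim V ⧸ D i` is surjective. -/
def IsCosetComplete (D : ι → Submodule k V) : Prop :=
  ∀ x : ι → V, (∀ i j, i ≤ j → x j - x i ∈ D i) → ∃ v, ∀ i, v - x i ∈ D i

structure IsCosetSystem (K : ι → Submodule k V) (Q : ι → AffineSubspace k V) : Prop where
  antitone : Antitone Q
  nonempty : ∀ i, (Q i : Set V).Nonempty
  le_direction : ∀ i, K i ≤ (Q i).direction

variable {K : ι → Submodule k V}

theorem IsCosetComplete.pi {W : Type*} (hKc : IsCosetComplete K) :
    IsCosetComplete fun i => Submodule.pi Set.univ fun _ : W => K i := by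
  intro x hx
  choose v hv using fun w => hKc (fun i => x i w) fun i j hij => hx i j hij w trivial
  exact ⟨fun w => v w, fun i w _ => hv w i⟩

instance {W : Type*} [Finite W] (L : Submodule k V) [FiniteDimensional k (V ⧸ L)] :
    FiniteDimensional k ((W → V) ⧸ Submodule.pi Set.univ fun _ : W => L) := by
  classical
  have := Fintype.ofFinite W
  exact Module.Finite.equiv (Submodule.quotientPi _).symm

variable [∀ i, FiniteDimensional k (V ⧸ K i)]

theorem IsCosetSystem.exists_minimal_le {P : ι → AffineSubspace k V}
    (hP : IsCosetSystem K P) : ∃ M ≤ P, Minimal (IsCosetSystem K) M := by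
  have hchain : ∀ c ⊆ {Q : (ι → AffineSubspace k V)ᵒᵈ | IsCosetSystem K (OrderDual.ofDual Q)},
      IsChain (· ≤ ·) c → ∀ Q₀ ∈ c, ∃ lb ∈ {Q : (ι → AffineSubspace k V)ᵒᵈ |
        IsCosetSystem K (OrderDual.ofDual Q)}, ∀ Q ∈ c, Q ≤ lb := by
    intro c hc hchain Q₀ hQ₀
    have : Nonempty c := ⟨⟨Q₀, hQ₀⟩⟩
    have hmin : ∀ i, ∃ m : c, ∀ Q : c, OrderDual.ofDual m.1 i ≤ OrderDual.ofDual Q.1 i := by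
      refine fun i => exists_forall_le_of_directed _ (fun a b => ?_)
        (fun Q => (hc Q.2).nonempty i) (fun Q => (hc Q.2).le_direction i)
      rcases hchain.total a.2 b.2 with h | h
      exacts [⟨b, h i, le_rfl⟩, ⟨a, le_rfl, h i⟩]
    choose m hm using hmin
    refine ⟨OrderDual.toDual fun i => OrderDual.ofDual (m i).1 i, ⟨fun i i' hii' => ?_,
      fun i => (hc (m i).2).nonempty i, fun i => (hc (m i).2).le_direction i⟩,
      fun Q hQ i => hm i ⟨Q, hQ⟩⟩
    exact (hm i' (m i)).trans ((hc (m i).2).antitone hii')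
  obtain ⟨M, hMP, hM⟩ := zorn_le_nonempty₀ _ hchain (OrderDual.toDual P) hP
  exact ⟨M, hMP, hM⟩

variable [IsDirected ι (· ≤ ·)] {M : ι → AffineSubspace k V}

/-- At each level `i` the saturations of the `R j` stabilise (finite codimension) and form a
coset system below `M`, so minimality pushes `M i` into them. -/
theorem IsCosetSystem.le_saturation_of_minimal (hK : Antitone K)
    (hM : Minimal (IsCosetSystem K) M) {R : ι → AffineSubspace k V}
    (hR : Antitone R) (hRM : R ≤ M) {i₀ : ι} (hRne : ∀ j, i₀ ≤ j → (R j : Set V).Nonempty)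
    {i j : ι} (hij : i ≤ j) (hi₀j : i₀ ≤ j) : M i ≤ saturation (K i) (R j) := by
  have hstable : ∀ i, ∃ j₁ : {j // i ≤ j ∧ i₀ ≤ j}, ∀ j : {j // i ≤ j ∧ i₀ ≤ j},
      saturation (K i) (R j₁) ≤ saturation (K i) (R j) := fun i => by
    obtain ⟨l, hil, hi₀l⟩ := exists_ge_ge i i₀
    have : Nonempty {j // i ≤ j ∧ i₀ ≤ j} := ⟨⟨l, hil, hi₀l⟩⟩
    refine exists_forall_le_of_directed _ (fun a b => ?_)
      (fun j => (hRne j j.2.2).mono le_saturation)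
      (fun j => le_direction_saturation (hRne j j.2.2))
    obtain ⟨l, hal, hbl⟩ := exists_ge_ge a.1 b.1
    exact ⟨⟨l, a.2.1.trans hal, a.2.2.trans hal⟩, saturation_mono (hR hal) le_rfl,
      saturation_mono (hR hbl) le_rfl⟩
  choose j₁ hj₁ using hstable
  let N i := saturation (K i) (R (j₁ i))
  have hN : IsCosetSystem K N := by
    refine ⟨fun i i' hii' => ?_, fun i => (hRne _ (j₁ i).2.2).mono le_saturation,
      fun i => le_direction_saturation (hRne _ (j₁ i).2.2)⟩
    obtain ⟨l, hl, hl'⟩ := exists_ge_ge (j₁ i).1 (j₁ i').1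
    calc N i' ≤ saturation (K i') (R l) :=
          hj₁ i' ⟨l, (j₁ i').2.1.trans hl', (j₁ i').2.2.trans hl'⟩
      _ ≤ N i := saturation_mono (hR hl) (hK hii')
  have hNM : N ≤ M := fun i =>
    saturation_le ((hRM _).trans (hM.prop.antitone (j₁ i).2.1)) (hM.prop.le_direction i)
  exact (hM.le_of_le hN hNM i).trans (hj₁ i ⟨j, hij, hi₀j⟩)

theorem IsCosetSystem.le_mk'_of_minimal (hK : Antitone K) (hM : Minimal (IsCosetSystem K) M)
    {i : ι} {p : V} (hp : p ∈ M i) : M i ≤ mk' p (K i) := by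
  let R j := M j ⊓ mk' p (K i)
  have hRne : ∀ j, i ≤ j → (R j : Set V).Nonempty := fun j hij => by
    obtain ⟨q, hq, hpq⟩ := mem_saturation.mp
      (IsCosetSystem.le_saturation_of_minimal hK hM hM.prop.antitone le_rfl
        (fun j _ => hM.prop.nonempty j) hij hij hp)
    exact ⟨q, hq, mem_mk'.mpr (by simpa using neg_mem hpq)⟩
  calc M i ≤ saturation (K i) (R i) :=
        IsCosetSystem.le_saturation_of_minimal hK hM
          (fun _ _ h => inf_le_inf_right _ (hM.prop.antitone h)) (fun _ => inf_le_left) hRne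
          le_rfl le_rfl
    _ ≤ mk' p (K i) := saturation_le inf_le_right (direction_mk' p (K i)).ge

/-- This is the linear compactness of `V`. -/
theorem IsCosetComplete.of_le (hK : Antitone K) (hKc : IsCosetComplete K)
    {D : ι → Submodule k V} (hD : Antitone D) (hKD : K ≤ D) : IsCosetComplete D := by
  intro x hx
  have hP : IsCosetSystem K fun i => mk' (x i) (D i) := by
    refine ⟨fun i j hij v hv => ?_, fun i => ⟨x i, self_mem_mk' _ _⟩,
      fun i => (direction_mk' (x i) (D i)).ge.trans' (hKD i)⟩
    rw [mem_mk', vsub_eq_sub] at hv ⊢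
    simpa using add_mem (hD hij hv) (hx i j hij)
  obtain ⟨M, hMP, hM⟩ := hP.exists_minimal_le
  choose p hp using hM.prop.nonempty
  obtain ⟨v, hv⟩ := hKc p fun i j hij => by
    simpa using IsCosetSystem.le_mk'_of_minimal hK hM (hp i) (hM.prop.antitone hij (hp j))
  refine ⟨v, fun i => ?_⟩
  have hvM : v ∈ M i := by
    simpa using vadd_mem_of_mem_direction (hM.prop.le_direction i (hv i)) (hp i)
  simpa using mem_mk'.mp (hMP i hvM)

theorem IsCosetComplete.exists_map_sub_mem (hK : Antitone K) (hKc : IsCosetComplete K)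
    {A : Type*} [AddCommGroup A] [Module k A] {L : ι → Submodule k A} (hL : Antitone L)
    (Φ : V →ₗ[k] A) (hΦ : ∀ i, K i ≤ (L i).comap Φ) {x : A}
    (hx : ∀ i, x ∈ LinearMap.range Φ ⊔ L i) : ∃ v, ∀ i, Φ v - x ∈ L i := by
  have ht : ∀ i, ∃ t, Φ t - x ∈ L i := fun i => by
    obtain ⟨_, ⟨t, rfl⟩, l, hl, hxl⟩ := Submodule.mem_sup.mp (hx i)
    exact ⟨t, by simpa [← hxl] using neg_mem hl⟩
  choose t ht using ht
  obtain ⟨v, hv⟩ := (hKc.of_le hK (fun i j hij => Submodule.comap_mono (hL hij)) hΦ) t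
    fun i j hij => by simpa using sub_mem (hL hij (ht j)) (ht i)
  exact ⟨v, fun i => by simpa using add_mem (mem_comap.mp (hv i)) (ht i)⟩

end CosetCompleteness

section LimitOfQuotients

open Topology

variable {k A ι : Type*} [Field k] [NonUnitalRing A] [Module k A] [TopologicalSpace A]
  [Preorder ι]

/-- `A` is the inverse limit, as a topological algebra, of the discrete algebras `A ⧸ K i`. -/
structure IsLimitOfQuotients (K : ι → Submodule k A) : Prop where
  antitone : Antitone K
  isCosetComplete : IsCosetComplete K
  eq_zero_of_forall_mem : ∀ x, (∀ i, x ∈ K i) → x = 0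
  mul_mem_left : ∀ i a x, x ∈ K i → a * x ∈ K i
  mul_mem_right : ∀ i a x, x ∈ K i → x * a ∈ K i
  nhds_hasBasis : ∀ x : A, (𝓝 x).HasBasis (fun _ => True) fun i => {y | y - x ∈ K i}

namespace IsLimitOfQuotients

variable {K : ι → Submodule k A} (hK : IsLimitOfQuotients K)
include hK

theorem nonempty : Nonempty ι := by
  obtain ⟨i, -⟩ := (hK.nhds_hasBasis 0).mem_iff.mp Filter.univ_mem
  exact ⟨i⟩

theorem mem_closure_iff {P : Submodule k A} {x : A} :
    x ∈ closure (P : Set A) ↔ ∀ i, x ∈ P ⊔ K i := by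
  rw [mem_closure_iff_nhds_basis (hK.nhds_hasBasis x)]
  refine forall_congr' fun i => ⟨fun h => ?_, fun hx _ => ?_⟩
  · obtain ⟨y, hy, hyx⟩ := h trivial
    simpa using add_mem_sup hy (neg_mem hyx)
  · obtain ⟨y, hy, z, hz, rfl⟩ := mem_sup.mp hx
    exact ⟨y, hy, by simpa using neg_mem hz⟩

theorem isClosed_iff {P : Submodule k A} :
    IsClosed (P : Set A) ↔ ∀ x, (∀ i, x ∈ P ⊔ K i) → x ∈ P := by
  rw [← closure_subset_iff_isClosed]
  exact forall_congr' fun x => by rw [hK.mem_closure_iff]; rfl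

theorem isOpen_of_le {P : Submodule k A} {i : ι} (h : K i ≤ P) : IsOpen (P : Set A) := by
  refine isOpen_iff_mem_nhds.mpr fun x hx => (hK.nhds_hasBasis x).mem_iff.mpr ⟨i, trivial, ?_⟩
  intro y hy
  simpa using add_mem (h hy) hx

theorem continuous_of_le_ker {C : Type*} [AddCommGroup C] [Module k C] [TopologicalSpace C]
    [DiscreteTopology C] (φ : A →ₗ[k] C) {i : ι} (h : K i ≤ LinearMap.ker φ) :
    Continuous φ := by
  refine continuous_iff_continuousAt.mpr fun x => ?_
  refine (hK.nhds_hasBasis x).tendsto_left_iff.mpr fun U hU => ⟨i, trivial, fun y hy => ?_⟩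
  have : φ y = φ x := by simpa [sub_eq_zero] using h hy
  simpa [this] using mem_of_mem_nhds hU

theorem setPow_univ_le_sup {S : NonUnitalSubalgebra k A} (hS : Dense (S : Set A)) (n : ℕ)
    (i : ι) : setPow k A Set.univ n ≤ setPow k A S n ⊔ K i :=
  setPow_le_sup (hK.mul_mem_left i) (hK.mul_mem_right i) (fun a _ => by
    obtain ⟨y, hy, z, hz, rfl⟩ :=
      mem_sup.mp (hK.mem_closure_iff (P := S.toSubmodule).mp (hS a) i)
    exact ⟨y, hy, by simpa using hz⟩) n

variable [IsDirected ι (· ≤ ·)]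

theorem isClosed_range_sumMulLeft [∀ i, FiniteDimensional k (A ⧸ K i)] [SMulCommClass k A A]
    {W : Type*} [Fintype W] (w : W → A) :
    IsClosed (LinearMap.range (sumMulLeft k w) : Set A) := by
  refine hK.isClosed_iff.mpr fun x hx => ?_
  obtain ⟨v, hv⟩ := hK.isCosetComplete.pi.exists_map_sub_mem
    (fun _ _ hij => pi_mono fun _ _ => hK.antitone hij) hK.antitone _
    (fun i t ht => by simpa using sum_mem fun j _ => hK.mul_mem_left i (w j) _ (ht j trivial))
    hx
  exact ⟨v, sub_eq_zero.mp (hK.eq_zero_of_forall_mem _ hv)⟩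

theorem isClosed_sup {P C : Submodule k A} (hP : IsClosed (P : Set A))
    [FiniteDimensional k C] : IsClosed ((C ⊔ P : Submodule k A) : Set A) := by
  have := hK.nonempty
  refine hK.isClosed_iff.mpr fun a ha => ?_
  let F i : AffineSubspace k C := (AffineSubspace.mk' a (P ⊔ K i)).comap C.subtype.toAffineMap
  have hF : ∀ i (c : C), c ∈ F i ↔ (c : A) - a ∈ P ⊔ K i := fun i c => by
    simp [F, AffineSubspace.mem_comap, AffineSubspace.mem_mk']
  have hFne : ∀ i, (F i : Set C).Nonempty := fun i => by
    obtain ⟨y, hy, z, hz, rfl⟩ := mem_sup.mp (ha i)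
    obtain ⟨c, hc, p, hp, rfl⟩ := mem_sup.mp hy
    refine ⟨⟨c, hc⟩, (hF i _).mpr ?_⟩
    rw [show (c : A) - (c + p + z) = -(p + z) by abel]
    exact neg_mem (add_mem_sup hp hz)
  obtain ⟨i₁, hi₁⟩ := AffineSubspace.exists_forall_le_of_directed (K := ⊥) F (fun i j => by
      obtain ⟨l, hil, hjl⟩ := exists_ge_ge i j
      exact ⟨l, fun c hc => (hF i c).mpr (sup_le_sup_left (hK.antitone hil) _ ((hF l c).mp hc)),
        fun c hc => (hF j c).mpr (sup_le_sup_left (hK.antitone hjl) _ ((hF l c).mp hc))⟩)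
    hFne fun _ => bot_le
  obtain ⟨c, hc⟩ := hFne i₁
  have hac : a - c ∈ P := hK.isClosed_iff.mp hP _ fun i => by
    simpa using neg_mem ((hF i c).mp (hi₁ i hc))
  simpa using add_mem_sup c.2 hac

theorem exists_le_of_isClosed {P : Submodule k A} (hP : IsClosed (P : Set A))
    [FiniteDimensional k (A ⧸ P)] : ∃ i, K i ≤ P := by
  have := hK.nonempty
  obtain ⟨i, hi⟩ := Submodule.exists_forall_le_of_directed (P := P) (fun i => P ⊔ K i)
    (fun i j => by
      obtain ⟨l, hil, hjl⟩ := exists_ge_ge i j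
      exact ⟨l, sup_le_sup_left (hK.antitone hil) _, sup_le_sup_left (hK.antitone hjl) _⟩)
    fun _ => le_sup_left
  exact ⟨i, fun x hx => hK.isClosed_iff.mp hP x fun j => hi j (mem_sup_right hx)⟩

variable [∀ i, FiniteDimensional k (A ⧸ K i)] [SMulCommClass k A A] [IsScalarTower k A A]
  {s : Set A} (hS : Dense (NonUnitalAlgebra.adjoin k s : Set A))
include hS

theorem setPow_univ_succ_eq_range {m : ℕ} (hm : 1 ≤ m) [Fintype (words s m)] :
    setPow k A Set.univ (m + 1) = LinearMap.range (sumMulLeft k ((↑) : words s m → A)) := by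
  refine le_antisymm (fun x hx => hK.isClosed_iff.mp (hK.isClosed_range_sumMulLeft _) x
    fun i => ?_) range_sumMulLeft_le_setPow_univ
  have hle : setPow k A (NonUnitalAlgebra.adjoin k s) (m + 1) ≤
      LinearMap.range (sumMulLeft k ((↑) : words s m → A)) :=
    (setPow_adjoin_le_span_wordsAtLeast s (m + 1)).trans
      (span_wordsAtLeast_le_range_sumMulLeft hm)
  exact sup_le_sup_right hle (K i) (hK.setPow_univ_le_sup hS (m + 1) i hx)

theorem isClosed_setPow_univ (hs : s.Finite) {n : ℕ} (hn : 1 ≤ n) :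
    IsClosed (setPow k A Set.univ n : Set A) := by
  obtain rfl | ⟨m, hm, rfl⟩ : n = 1 ∨ ∃ m, 1 ≤ m ∧ n = m + 1 := by
    rcases n with _ | _ | m <;> simp_all
  · simp [setPow_univ_one]
  · have := (words_finite hs m).fintype
    rw [hK.setPow_univ_succ_eq_range hS hm]
    exact hK.isClosed_range_sumMulLeft _

theorem setPow_univ_eq_closure (hs : s.Finite) {n : ℕ} (hn : 1 ≤ n) :
    (setPow k A Set.univ n : Set A) =
      closure (setPow k A (NonUnitalAlgebra.adjoin k s : Set A) n : Set A) :=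
  Set.Subset.antisymm
    (fun _ hx => hK.mem_closure_iff.mpr fun i => hK.setPow_univ_le_sup hS n i hx)
    (closure_minimal (setPow_mono (Set.subset_univ _) n) (hK.isClosed_setPow_univ hS hs hn))

theorem exists_le_setPow_univ (hs : s.Finite) {n : ℕ} (hn : 1 ≤ n) :
    ∃ i, K i ≤ setPow k A Set.univ n := by
  set C := span k {x | ∃ m < n, x ∈ words s m}
  have : FiniteDimensional k C := FiniteDimensional.span_of_finite k
    (((Set.finite_lt_nat n).biUnion fun m _ => words_finite hs m).subset
      fun _ ⟨m, hm, hx⟩ => Set.mem_biUnion hm hx)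
  have hclosed := hK.isClosed_sup (C := C) (hK.isClosed_setPow_univ hS hs hn)
  have htop : ∀ a, a ∈ C ⊔ setPow k A Set.univ n := fun a => by
    have hdense :=
      hS.mono ((adjoin_le_span_wordsAtLeast s).trans (span_wordsAtLeast_le_sup s hn))
    simpa [hclosed.closure_eq] using hdense a
  have : FiniteDimensional k (A ⧸ setPow k A Set.univ n) := by
    refine Module.Finite.of_surjective ((setPow k A Set.univ n).mkQ ∘ₗ C.subtype) fun q => ?_
    obtain ⟨a, rfl⟩ := Submodule.mkQ_surjective _ q
    obtain ⟨c, hc, p, hp, rfl⟩ := mem_sup.mp (htop a)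
    exact ⟨⟨c, hc⟩, (Submodule.Quotient.eq _).mpr (by simpa using neg_mem hp)⟩
  exact hK.exists_le_of_isClosed (hK.isClosed_setPow_univ hS hs hn)

theorem isOpen_setPow_univ (hs : s.Finite) {n : ℕ} (hn : 1 ≤ n) :
    IsOpen (setPow k A Set.univ n : Set A) :=
  let ⟨_, hi⟩ := hK.exists_le_setPow_univ hS hs hn
  hK.isOpen_of_le hi

theorem continuous_of_setPow_univ_le_ker (hs : s.Finite) {C : Type*} [AddCommGroup C]
    [Module k C] [TopologicalSpace C] [DiscreteTopology C] (φ : A →ₗ[k] C) {n : ℕ} (hn : 1 ≤ n)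
    (h : setPow k A Set.univ n ≤ LinearMap.ker φ) : Continuous φ :=
  let ⟨_, hi⟩ := hK.exists_le_setPow_univ hS hs hn
  hK.continuous_of_le_ker φ (hi.trans h)

end IsLimitOfQuotients

end LimitOfQuotients

section Quasiregular

variable {k D : Type*} [Field k] [NonUnitalRing D] [Module k D] [SMulCommClass k D D]
  [IsScalarTower k D D]

theorem Unitization.inr_pow_succ (b : D) (m : ℕ) :
    (b : Unitization k D) ^ (m + 1) = ((List.replicate m b).foldl (· * ·) b : D) := by
  induction m with
  | zero => simp
  | succ m ih =>
    rw [pow_succ, ih, List.replicate_succ', List.foldl_append, List.foldl_cons, List.foldl_nil,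
      Unitization.inr_mul k]

theorem isQuasiregular_of_setPow_univ_eq_bot {n : ℕ} (hn : 1 ≤ n)
    (h : setPow k D Set.univ n = ⊥) (b : D) : IsQuasiregular b := by
  obtain ⟨m, rfl⟩ : ∃ m, n = m + 1 := ⟨n - 1, by omega⟩
  have hb : (List.replicate m b).foldl (· * ·) b ∈ setPow k D Set.univ (m + 1) :=
    subset_span ⟨b, _, trivial, fun _ _ => trivial, by simp, rfl⟩
  rw [h, mem_bot] at hb
  rw [isQuasiregular_iff_isUnit' k]
  exact IsNilpotent.isUnit_one_add ⟨m + 1, by rw [Unitization.inr_pow_succ, hb]; simp⟩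

theorem eq_of_quasiinverse {x y y' : D} (hy : y + x + x * y = 0) (hy' : x + y' + y' * x = 0) :
    y' = y :=
  calc y' = y' + (y + x + x * y) + y' * (y + x + x * y) - (x + y' + y' * x)
        - (x + y' + y' * x) * y := by rw [hy, hy']; simp
    _ = y := by noncomm_ring

/-- `D` lies in the Jacobson radical of its unitization, which is nilpotent because the
unitization is Artinian. -/
theorem exists_setPow_univ_eq_bot_of_isQuasiregular [FiniteDimensional k D]
    (h : ∀ x : D, IsQuasiregular x) : ∃ m, 1 ≤ m ∧ setPow k D Set.univ m = ⊥ := by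
  have : Module.Finite k (Unitization k D) :=
    Module.Finite.equiv (Unitization.linearEquiv k k D).symm
  have : IsArtinianRing (Unitization k D) := IsArtinianRing.of_finite k _
  set J := Ideal.jacobson (⊥ : Ideal (Unitization k D))
  have hJ (x : D) : (x : Unitization k D) ∈ J := Ideal.mem_jacobson_iff.mpr fun y => by
    have hyx : y * (x : Unitization k D) = ((y * x).snd : Unitization k D) := by
      ext <;> simp
    obtain ⟨u, hu⟩ := (isQuasiregular_iff_isUnit' k).mp (h (y * (x : Unitization k D)).snd)
    refine ⟨↑u⁻¹, ?_⟩
    rw [mul_assoc, hyx, Ideal.mem_bot,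
      show ∀ z d : Unitization k D, z * d + z - 1 = z * (1 + d) - 1 from fun _ _ => by
        noncomm_ring, ← hu, Units.inv_mul, sub_self]
  have hfoldl : ∀ (l : List D) (a : D) (p : ℕ), (a : Unitization k D) ∈ J ^ (p + 1) →
      ((l.foldl (· * ·) a : D) : Unitization k D) ∈ J ^ (p + 1 + l.length) := by
    intro l
    induction l with
    | nil => simp
    | cons b l ih =>
      intro a p ha
      have := ih (a * b) (p + 1) (by
        rw [Unitization.inr_mul k, Submodule.pow_succ]; exact Submodule.mul_mem_mul ha (hJ b))
      rwa [List.foldl_cons, List.length_cons, show p + 1 + (l.length + 1) = p + 1 + 1 + l.length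
        by omega]
  obtain ⟨m, hm⟩ := IsArtinianRing.isNilpotent_jacobson_bot (R := Unitization k D)
  refine ⟨m + 1, by omega, span_eq_bot.mpr ?_⟩
  rintro _ ⟨a, l, -, -, hl, rfl⟩
  have := hfoldl l a 0 (by simpa [Submodule.pow_one] using hJ a)
  rw [show 0 + 1 + l.length = m + 1 by omega, Submodule.pow_succ, hm, Submodule.zero_eq_bot,
    Submodule.bot_mul, Ideal.mem_bot] at this
  exact Unitization.inr_injective (R := k) (by simpa using this)

end Quasiregular

theorem exists_setPow_univ_le_ker_of_isQuasiregular {k A C : Type*} [Field k]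
    [NonUnitalRing A] [Module k A] [SMulCommClass k A A] [IsScalarTower k A A]
    [NonUnitalRing C] [Module k C] [SMulCommClass k C C] [IsScalarTower k C C]
    [FiniteDimensional k C] (φ : A →ₙₐ[k] C) (h : ∀ a : A, IsQuasiregular a) :
    ∃ m, 1 ≤ m ∧ setPow k A Set.univ m ≤ LinearMap.ker (φ : A →ₗ[k] C) := by
  have : FiniteDimensional k (NonUnitalAlgHom.range φ) :=
    FiniteDimensional.finiteDimensional_submodule (NonUnitalAlgHom.range φ).toSubmodule
  obtain ⟨m, hm, hbot⟩ := exists_setPow_univ_eq_bot_of_isQuasiregular (k := k)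
    (D := NonUnitalAlgHom.range φ) fun ⟨_, a, rfl⟩ =>
      (h a).map (NonUnitalAlgHom.rangeRestrict φ)
  refine ⟨m, hm,
    (setPow_univ_le_ker (NonUnitalAlgHom.rangeRestrict φ) hbot).trans fun a ha => ?_⟩
  simpa using congrArg Subtype.val (LinearMap.mem_ker.mp ha)

section InverseLimit

open Topology

variable {k A ι : Type*} [Field k] [NonUnitalRing A] [Module k A]
  {B : ι → Type*} [∀ i, NonUnitalRing (B i)] [∀ i, Module k (B i)] {π : ∀ i, A →ₙₐ[k] B i}

theorem finiteDimensional_quotient_ker [∀ i, FiniteDimensional k (B i)] (i : ι) :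
    FiniteDimensional k (A ⧸ LinearMap.ker (π i : A →ₗ[k] B i)) :=
  Module.Finite.equiv (LinearMap.quotKerEquivRange _).symm

variable [Preorder ι] {f : ∀ i j, i ≤ j → B j →ₙₐ[k] B i}

theorem isQuasiregular_of_forall_isQuasiregular_apply
    (hcomp : ∀ i j (hij : i ≤ j) (a : A), f i j hij (π j a) = π i a)
    (hinj : Function.Injective fun (a : A) (i : ι) => π i a)
    (hrange : Set.range (fun (a : A) (i : ι) => π i a) =
      {x : ∀ i, B i | ∀ i j (hij : i ≤ j), f i j hij (x j) = x i})
    {a : A} (ha : ∀ i, IsQuasiregular (π i a)) : IsQuasiregular a := by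
  choose q hq₁ hq₂ using fun i => isQuasiregular_iff.mp (ha i)
  obtain ⟨a', ha'⟩ : q ∈ Set.range (fun (a : A) (i : ι) => π i a) := by
    rw [hrange]
    intro i j hij
    refine eq_of_quasiinverse (hq₁ i) ?_
    simpa [hcomp] using congrArg (f i j hij) (hq₂ j)
  refine isQuasiregular_iff.mpr ⟨a', hinj ?_, hinj ?_⟩ <;> funext i <;>
    simp [congrFun ha' i, hq₁ i, hq₂ i]

theorem isLimitOfQuotients_ker [TopologicalSpace A] [∀ i, TopologicalSpace (B i)]
    [∀ i, DiscreteTopology (B i)] [IsDirected ι (· ≤ ·)] [Nonempty ι]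
    (hcomp : ∀ i j (hij : i ≤ j) (a : A), f i j hij (π j a) = π i a)
    (hemb : IsEmbedding fun (a : A) (i : ι) => π i a)
    (hrange : Set.range (fun (a : A) (i : ι) => π i a) =
      {x : ∀ i, B i | ∀ i j (hij : i ≤ j), f i j hij (x j) = x i}) :
    IsLimitOfQuotients fun i => LinearMap.ker (π i : A →ₗ[k] B i) where
  antitone i j hij x hx := by
    have hx : π j x = 0 := by simpa using hx
    simp [← hcomp i j hij, hx]
  isCosetComplete x hx := by
    obtain ⟨a, ha⟩ : (fun i => π i (x i)) ∈ Set.range fun (a : A) (i : ι) => π i a := by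
      rw [hrange]
      intro i j hij
      rw [hcomp, ← sub_eq_zero, ← map_sub]
      simpa using hx i j hij
    exact ⟨a, fun i => by simp [congrFun ha i]⟩
  eq_zero_of_forall_mem x hx := hemb.injective (funext fun i => by simpa using hx i)
  mul_mem_left i a x hx := by simp_all
  mul_mem_right i a x hx := by simp_all
  nhds_hasBasis x := by
    refine ⟨fun t => ⟨fun ht => ?_, fun ⟨i, _, hi⟩ => ?_⟩⟩
    · rw [hemb.isInducing.nhds_eq_comap, Filter.mem_comap, nhds_pi] at ht
      obtain ⟨V, hV, hVt⟩ := ht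
      obtain ⟨I, u, hu, hIV⟩ := Filter.mem_pi'.mp hV
      obtain ⟨i₀, hi₀⟩ := I.exists_le
      refine ⟨i₀, trivial, fun y hy => hVt (hIV fun i hi => ?_)⟩
      have hy' : π i₀ y = π i₀ x := by simpa [sub_eq_zero] using hy
      simpa [← hcomp i i₀ (hi₀ i hi), hy', nhds_discrete] using hu i
    · refine Filter.mem_of_superset ((isOpen_discrete {π i x}).preimage
        ((continuous_apply i).comp hemb.continuous) |>.mem_nhds rfl) fun y hy => hi ?_
      simpa [sub_eq_zero] using hy

end InverseLimit

/-- Let `A` be a topological nonunital associative `k`-algebra which is the inverse limit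
(with the inverse limit topology) of an inversely directed system of finite-dimensional
discrete `k`-algebras `B i`, and suppose the subalgebra generated by some finite subset
`s` of `A` is dense in `A`.  Then:
(i) for every `n ≥ 1` the ideal `Aⁿ` is open and equals the closure of `Sⁿ`;
(ii) every `k`-algebra homomorphism from `A` to a nilpotent `k`-algebra `C`, given the
discrete topology, is continuous; and
(iii) if all the `B i` are nilpotent, every `k`-algebra homomorphism from `A` to a
finite-dimensional (discrete) `k`-algebra `C` is continuous. -/
theorem continuity_of_homs_on_pro_nilpotent_assoc (k : Type*) [Field k]
    (A : Type*) [NonUnitalRing A] [Module k A] [SMulCommClass k A A] [IsScalarTower k A A]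
    [TopologicalSpace A]
    (ι : Type*) [Preorder ι] [IsDirected ι (· ≤ ·)]
    (B : ι → Type*) [∀ i, NonUnitalRing (B i)] [∀ i, Module k (B i)]
    [∀ i, SMulCommClass k (B i) (B i)] [∀ i, IsScalarTower k (B i) (B i)]
    [∀ i, TopologicalSpace (B i)] [∀ i, DiscreteTopology (B i)]
    [∀ i, FiniteDimensional k (B i)]
    (f : ∀ i j, i ≤ j → (B j →ₙₐ[k] B i))
    (π : ∀ i, A →ₙₐ[k] B i)
    (hcomp : ∀ (i j) (hij : i ≤ j) (a : A), f i j hij (π j a) = π i a)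
    (hemb : Topology.IsEmbedding (fun (a : A) (i : ι) => π i a))
    (hrange : Set.range (fun (a : A) (i : ι) => π i a) =
      {x : ∀ i, B i | ∀ (i j) (hij : i ≤ j), f i j hij (x j) = x i})
    (s : Finset A)
    (hdense : Dense
      ((NonUnitalAlgebra.adjoin k (↑s : Set A) : NonUnitalSubalgebra k A) : Set A)) :
    (∀ n : ℕ, 1 ≤ n →
      IsOpen ((setPow k A Set.univ n : Submodule k A) : Set A) ∧
      ((setPow k A Set.univ n : Submodule k A) : Set A) =
        closure ((setPow k A
          ((NonUnitalAlgebra.adjoin k (↑s : Set A) : NonUnitalSubalgebra k A) : Set A) n :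
            Submodule k A) : Set A)) ∧
    (∀ (C : Type*) [NonUnitalRing C] [Module k C] [SMulCommClass k C C]
        [IsScalarTower k C C] [TopologicalSpace C] [DiscreteTopology C],
      (∃ n : ℕ, 1 ≤ n ∧ setPow k C Set.univ n = ⊥) →
      ∀ φ : A →ₙₐ[k] C, Continuous φ) ∧
    ((∀ i, ∃ n : ℕ, 1 ≤ n ∧ setPow k (B i) Set.univ n = ⊥) →
      ∀ (C : Type*) [NonUnitalRing C] [Module k C] [SMulCommClass k C C]
        [IsScalarTower k C C] [TopologicalSpace C] [DiscreteTopology C]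
        [FiniteDimensional k C],
      ∀ φ : A →ₙₐ[k] C, Continuous φ) := by
  rcases isEmpty_or_nonempty ι with hι | hι
  · have : Subsingleton A := ⟨fun a b => hemb.injective (funext isEmptyElim)⟩
    have huniv : ∀ P : Submodule k A, (P : Set A) = Set.univ := fun P =>
      Set.eq_univ_of_forall fun x => Subsingleton.elim 0 x ▸ P.zero_mem
    exact ⟨fun n _ => ⟨isOpen_discrete _, by rw [huniv, huniv, closure_univ]⟩,
      fun _ _ _ _ _ _ _ _ _ => continuous_of_discreteTopology,
      fun _ _ _ _ _ _ _ _ _ _ => continuous_of_discreteTopology⟩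
  have := fun i => finiteDimensional_quotient_ker (π := π) i
  have hK := isLimitOfQuotients_ker hcomp hemb hrange
  have hs := s.finite_toSet
  refine ⟨fun n hn => ⟨hK.isOpen_setPow_univ hdense hs hn,
    hK.setPow_univ_eq_closure hdense hs hn⟩, ?_, fun hB C _ _ _ _ _ _ _ φ => ?_⟩
  · rintro C _ _ _ _ _ _ ⟨n, hn, hC⟩ φ
    exact hK.continuous_of_setPow_univ_le_ker hdense hs (φ : A →ₗ[k] C) hn
      (setPow_univ_le_ker φ hC)
  · have hqr (a : A) : IsQuasiregular a :=
      isQuasiregular_of_forall_isQuasiregular_apply hcomp hemb.injective hrange fun i =>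
        let ⟨_, hn, hBn⟩ := hB i
        isQuasiregular_of_setPow_univ_eq_bot hn hBn _
    obtain ⟨m, hm, hker⟩ := exists_setPow_univ_le_ker_of_isQuasiregular φ hqr
    exact hK.continuous_of_setPow_univ_le_ker hdense hs (φ : A →ₗ[k] C) hm hker
end
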